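/- (Deterministic restart property underlying Theorem 3.) Let A be a real n×n matrix, B a real n×p matrix, u : ℝ → ℝᵖ, and let ξ : ℝ → ℝⁿ be differentiable with ξ'(t) = Aξ(t) + Bu(t) for all t. Let M be a real symmetric positive definite n×n matrix and μ ∈ ℝ with AᵀM + MA + μM ⪯ 0. Fix t₁ ∈ ℝ, a shift σ ∈ ℝ, and a restart state x' ∈ ℝⁿ with (x' − ξ(t₁ + σ))ᵀ M (x' − ξ(t₁ + σ)) ≤ r for some r ≥ 0. Let ζ : ℝ → ℝⁿ be differentiable with ζ(t₁) = x' and ζ'(t) = Aζ(t) + Bu(t + σ) for all t ≥ t₁ (the dynamics driven by the σ-time-shifted input). Then for all t ≥ t₁: (ζ(t) − ξ(t + σ))ᵀ M (ζ(t) − ξ(t + σ)) ≤ r e^{−μ(t − t₁)}. -/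

import Mathlib

/-!
The deviation `e t = ζ t - ξ (t + σ)` of the restarted trajectory from the shifted nominal one
solves the homogeneous system `e' = A e`, because both trajectories are driven by the same input
`u (t + σ)`. Along it, `V = eᵀ M e` satisfies `V' = eᵀ (Aᵀ M + M A) e ≤ -μ V` by the Lyapunov
inequality, so Grönwall gives `V t ≤ V t₁ e^{-μ (t - t₁)}`, and `V t₁ ≤ r`.
-/

open Matrix Set Real

variable {ι κ : Type*} [Fintype ι] [Fintype κ]

theorem HasDerivAt.dotProduct_mulVec_self (M : Matrix ι ι ℝ) {e : ℝ → ι → ℝ} {d : ι → ℝ}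
    {s : ℝ} (he : HasDerivAt e d s) :
    HasDerivAt (fun t => e t ⬝ᵥ M *ᵥ e t) (d ⬝ᵥ M *ᵥ e s + e s ⬝ᵥ M *ᵥ d) s := by
  have hcoord : ∀ i, HasDerivAt (fun t => e t i) (d i) s := fun i => hasDerivAt_pi.1 he i
  have hrow : ∀ i, HasDerivAt (fun t => ∑ j, M i j * e t j) (∑ j, M i j * d j) s :=
    fun i => HasDerivAt.fun_sum fun j _ => (hcoord j).const_mul (M i j)
  have h := HasDerivAt.fun_sum fun i (_ : i ∈ Finset.univ) => (hcoord i).mul (hrow i)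
  simpa [dotProduct, mulVec, Finset.sum_add_distrib] using h

theorem mulVec_dotProduct_add_dotProduct_mulVec_le {A M : Matrix ι ι ℝ} {μ : ℝ}
    (hLMI : ∀ v : ι → ℝ, v ⬝ᵥ (Aᵀ * M + M * A + μ • M) *ᵥ v ≤ 0) (v : ι → ℝ) :
    A *ᵥ v ⬝ᵥ M *ᵥ v + v ⬝ᵥ M *ᵥ (A *ᵥ v) ≤ -μ * (v ⬝ᵥ M *ᵥ v) := by
  have hleft : A *ᵥ v ⬝ᵥ M *ᵥ v = v ⬝ᵥ (Aᵀ * M) *ᵥ v := by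
    rw [← mulVec_mulVec, dotProduct_mulVec v, vecMul_transpose]
  have hright : v ⬝ᵥ M *ᵥ (A *ᵥ v) = v ⬝ᵥ (M * A) *ᵥ v := by
    rw [mulVec_mulVec]
  have h := hLMI v
  rw [add_mulVec, add_mulVec, dotProduct_add, dotProduct_add, smul_mulVec, dotProduct_smul,
    smul_eq_mul] at h
  linarith

theorem le_mul_exp_of_hasDerivAt_le_mul {V V' : ℝ → ℝ} {K t₁ : ℝ}
    (hV : ∀ s, t₁ ≤ s → HasDerivAt V (V' s) s) (hbound : ∀ s, t₁ ≤ s → V' s ≤ K * V s)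
    (t : ℝ) (ht : t₁ ≤ t) : V t ≤ V t₁ * exp (K * (t - t₁)) := by
  have h := le_gronwallBound_of_liminf_deriv_right_le (f := V) (f' := V') (δ := V t₁) (K := K)
    (ε := 0) (a := t₁) (b := t)
    (fun s hs => (hV s hs.1).continuousAt.continuousWithinAt)
    (fun s hs _ hr => (hV s hs.1).hasDerivWithinAt.liminf_right_slope_le hr) le_rfl
    (fun s hs => by simpa using hbound s hs.1) t ⟨ht, le_rfl⟩
  rwa [gronwallBound_ε0] at h

theorem dotProduct_mulVec_self_le_mul_exp_of_lyapunov {A M : Matrix ι ι ℝ} {μ t₁ : ℝ}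
    (hLMI : ∀ v : ι → ℝ, v ⬝ᵥ (Aᵀ * M + M * A + μ • M) *ᵥ v ≤ 0) {e : ℝ → ι → ℝ}
    (he : ∀ s, t₁ ≤ s → HasDerivAt e (A *ᵥ e s) s) (t : ℝ) (ht : t₁ ≤ t) :
    e t ⬝ᵥ M *ᵥ e t ≤ (e t₁ ⬝ᵥ M *ᵥ e t₁) * exp (-μ * (t - t₁)) :=
  le_mul_exp_of_hasDerivAt_le_mul (V := fun t => e t ⬝ᵥ M *ᵥ e t)
    (fun s hs => (he s hs).dotProduct_mulVec_self M)
    (fun s _ => mulVec_dotProduct_add_dotProduct_mulVec_le hLMI (e s)) t ht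

theorem hasDerivAt_sub_comp_add_of_same_input {A : Matrix ι ι ℝ} {B : Matrix ι κ ℝ}
    {w : κ → ℝ} {ξ ζ : ℝ → ι → ℝ} {σ s : ℝ}
    (hξ : HasDerivAt ξ (A *ᵥ ξ (s + σ) + B *ᵥ w) (s + σ))
    (hζ : HasDerivAt ζ (A *ᵥ ζ s + B *ᵥ w) s) :
    HasDerivAt (fun t => ζ t - ξ (t + σ)) (A *ᵥ (ζ s - ξ (s + σ))) s := by
  have hshift : HasDerivAt (fun t => ξ (t + σ)) (A *ᵥ ξ (s + σ) + B *ᵥ w) s := by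
    simpa [Function.comp_def] using hξ.scomp s ((hasDerivAt_id s).add_const σ)
  have hcancel : A *ᵥ ζ s + B *ᵥ w - (A *ᵥ ξ (s + σ) + B *ᵥ w) = A *ᵥ (ζ s - ξ (s + σ)) := by
    rw [mulVec_sub]
    abel
  simpa only [hcancel] using hζ.fun_sub hshift

theorem stmt_12_general {n p : ℕ} (A : Matrix (Fin n) (Fin n) ℝ) (B : Matrix (Fin n) (Fin p) ℝ)
    (u : ℝ → Fin p → ℝ) (ξ : ℝ → Fin n → ℝ)
    (hξ : ∀ t : ℝ, HasDerivAt ξ (A.mulVec (ξ t) + B.mulVec (u t)) t)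
    (M : Matrix (Fin n) (Fin n) ℝ) (μ : ℝ)
    (hLMI : ∀ v : Fin n → ℝ, v ⬝ᵥ (Aᵀ * M + M * A + μ • M).mulVec v ≤ 0)
    (t₁ σ : ℝ) (x' : Fin n → ℝ) (r : ℝ)
    (hx' : (x' - ξ (t₁ + σ)) ⬝ᵥ M.mulVec (x' - ξ (t₁ + σ)) ≤ r)
    (ζ : ℝ → Fin n → ℝ) (hζ0 : ζ t₁ = x')
    (hζ : ∀ t : ℝ, t₁ ≤ t → HasDerivAt ζ (A.mulVec (ζ t) + B.mulVec (u (t + σ))) t) :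
    ∀ t : ℝ, t₁ ≤ t →
      (ζ t - ξ (t + σ)) ⬝ᵥ M.mulVec (ζ t - ξ (t + σ)) ≤ r * Real.exp (-μ * (t - t₁)) := by
  intro t ht
  have hdecay := dotProduct_mulVec_self_le_mul_exp_of_lyapunov hLMI (e := fun t => ζ t - ξ (t + σ))
    (fun s hs => hasDerivAt_sub_comp_add_of_same_input (hξ (s + σ)) (hζ s hs)) t ht
  rw [hζ0] at hdecay
  exact hdecay.trans (mul_le_mul_of_nonneg_right hx' (exp_pos _).le)

/-- Deterministic restart property underlying Theorem 3: if at time t₁ the state is perturbed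
to x' inside the r-ellipsoid around the nominal state ξ(t₁ + σ), and the dynamics are restarted
from x' with the σ-time-shifted input, then the deviation from the shifted nominal trajectory
decays: (ζ(t) − ξ(t + σ))ᵀ M (ζ(t) − ξ(t + σ)) ≤ r e^{−μ(t − t₁)} for all t ≥ t₁. -/
theorem stmt_12 {n p : ℕ} (A : Matrix (Fin n) (Fin n) ℝ) (B : Matrix (Fin n) (Fin p) ℝ)
    (u : ℝ → Fin p → ℝ) (ξ : ℝ → Fin n → ℝ)
    (hξ : ∀ t : ℝ, HasDerivAt ξ (A.mulVec (ξ t) + B.mulVec (u t)) t)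
    (M : Matrix (Fin n) (Fin n) ℝ) (hMsym : M = Mᵀ)
    (hMpd : ∀ v : Fin n → ℝ, v ≠ 0 → 0 < v ⬝ᵥ M.mulVec v) (μ : ℝ)
    (hLMI : ∀ v : Fin n → ℝ, v ⬝ᵥ (Aᵀ * M + M * A + μ • M).mulVec v ≤ 0)
    (t₁ σ : ℝ) (x' : Fin n → ℝ) (r : ℝ) (hr : 0 ≤ r)
    (hx' : (x' - ξ (t₁ + σ)) ⬝ᵥ M.mulVec (x' - ξ (t₁ + σ)) ≤ r)
    (ζ : ℝ → Fin n → ℝ) (hζ0 : ζ t₁ = x')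
    (hζ : ∀ t : ℝ, t₁ ≤ t → HasDerivAt ζ (A.mulVec (ζ t) + B.mulVec (u (t + σ))) t) :
    ∀ t : ℝ, t₁ ≤ t →
      (ζ t - ξ (t + σ)) ⬝ᵥ M.mulVec (ζ t - ξ (t + σ)) ≤ r * Real.exp (-μ * (t - t₁)) :=
  stmt_12_general A B u ξ hξ M μ hLMI t₁ σ x' r hx' ζ hζ0 hζ
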